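/- Let F be a field, n ≥ 2, and let c₁,…,c_{n−1} and d₁,…,d_{n−1} be nonzero elements of F. Set N = ∑_{i=1}^{n−1} cᵢ E_{i,i+1} and N' = ∑_{i=1}^{n−1} dᵢ E_{i,i+1}. Then there exists g ∈ SL_n(F) with g N g⁻¹ = N' if and only if ∏_{i=1}^{n−1} (dᵢ/cᵢ)^{n−i} is an n-th power in Fˣ. -/

import Mathlib

/-!
If `g N_c = N_d g`, the vanishing first column of `g N_c` and the entries
`g_{a,b} c_b = d_a g_{a+1,b+1}` force `g` to be upper triangular with
`g_{k+1,k+1} = g_{k,k} c_k / d_k`. Hence `det g = g_{0,0}^n ∏_k (c_k / d_k)^{n-1-k}`, and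
`det g = 1` makes `g_{0,0}` an `n`-th root of `∏_k (d_k / c_k)^{n-1-k}`. Conversely, for such a
root `y`, the diagonal matrix with entries `y ∏_{j<k} c_j / d_j` has determinant `1` and
conjugates `N_c` to `N_d`.
-/

open Finset

namespace Fin

variable {M : Type*} {m : ℕ}

theorem eq_mul_partialProd [Monoid M] {x : Fin (m + 1) → M} {r : Fin m → M}
    (h : ∀ i, x i.succ = x i.castSucc * r i) (k : Fin (m + 1)) :
    x k = x 0 * partialProd r k := by
  induction k using Fin.induction with
  | zero => simp
  | succ i ih => rw [h, ih, partialProd_succ, mul_assoc]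

theorem prod_partialProd [CommMonoid M] (r : Fin m → M) :
    ∏ k, partialProd r k = ∏ i, r i ^ (m - i) := by
  induction m with
  | zero => simp
  | succ m ih =>
    rw [prod_univ_succ]
    conv_rhs => rw [prod_univ_succ]
    simp_rw [partialProd_succ', prod_mul_distrib, ih]
    simp [tail]

theorem prod_mul_partialProd [CommMonoid M] (a : M) (r : Fin m → M) :
    ∏ k, a * partialProd r k = a ^ (m + 1) * ∏ i, r i ^ (m - i) := by
  rw [prod_mul_distrib, prod_const, prod_partialProd]

end Fin

namespace Matrix

variable {R : Type*} {m : ℕ}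

def superdiagonal [AddCommMonoid R] (c : Fin m → R) : Matrix (Fin (m + 1)) (Fin (m + 1)) R :=
  ∑ i, single i.castSucc i.succ (c i)

section Semiring

variable [Semiring R]

theorem mul_superdiagonal_apply_zero (G : Matrix (Fin (m + 1)) (Fin (m + 1)) R) (c : Fin m → R)
    (a : Fin (m + 1)) : (G * superdiagonal c) a 0 = 0 := by
  rw [superdiagonal, mul_sum, Matrix.sum_apply]
  exact sum_eq_zero fun i _ => mul_single_apply_of_ne _ _ _ _ _ (Fin.succ_ne_zero i).symm _

theorem mul_superdiagonal_apply_succ (G : Matrix (Fin (m + 1)) (Fin (m + 1)) R) (c : Fin m → R)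
    (a : Fin (m + 1)) (j : Fin m) : (G * superdiagonal c) a j.succ = G a j.castSucc * c j := by
  rw [superdiagonal, mul_sum, Matrix.sum_apply, sum_eq_single j (fun i _ hij => ?_) (by simp)]
  · exact mul_single_apply_same ..
  · exact mul_single_apply_of_ne _ _ _ _ _ (Fin.succ_injective _ |>.ne hij.symm) _

theorem superdiagonal_mul_apply_castSucc (G : Matrix (Fin (m + 1)) (Fin (m + 1)) R)
    (d : Fin m → R) (i : Fin m) (b : Fin (m + 1)) :
    (superdiagonal d * G) i.castSucc b = d i * G i.succ b := by
  rw [superdiagonal, sum_mul, Matrix.sum_apply, sum_eq_single i (fun j _ hji => ?_) (by simp)]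
  · exact single_mul_apply_same ..
  · exact single_mul_apply_of_ne _ _ _ _ _ (Fin.castSucc_injective _ |>.ne hji.symm) _

theorem diagonal_mul_superdiagonal (x : Fin (m + 1) → R) (c : Fin m → R) :
    diagonal x * superdiagonal c = superdiagonal fun i => x i.castSucc * c i := by
  ext a b
  simp only [superdiagonal, diagonal_mul, Matrix.sum_apply, mul_sum, single_apply]
  refine sum_congr rfl fun i _ => ?_
  split_ifs with h
  · rw [h.1]
  · exact mul_zero _

theorem superdiagonal_mul_diagonal (x : Fin (m + 1) → R) (d : Fin m → R) :
    superdiagonal d * diagonal x = superdiagonal fun i => d i * x i.succ := by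
  ext a b
  simp only [superdiagonal, mul_diagonal, Matrix.sum_apply, sum_mul, single_apply]
  refine sum_congr rfl fun i _ => ?_
  split_ifs with h
  · rw [h.2]
  · exact zero_mul _

theorem blockTriangular_of_mul_superdiagonal_eq [NoZeroDivisors R]
    {G : Matrix (Fin (m + 1)) (Fin (m + 1)) R} {c d : Fin m → R} (hd : ∀ i, d i ≠ 0)
    (h : G * superdiagonal c = superdiagonal d * G) : G.BlockTriangular id := by
  have entry (i : Fin m) (b : Fin (m + 1)) :
      d i * G i.succ b = (G * superdiagonal c) i.castSucc b := by
    rw [h, superdiagonal_mul_apply_castSucc]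
  intro a b hba
  induction b using Fin.induction generalizing a with
  | zero =>
    obtain ⟨i, rfl⟩ := Fin.exists_succ_eq.2 (Fin.pos_iff_ne_zero.1 hba)
    simpa [mul_superdiagonal_apply_zero, hd i] using entry i 0
  | succ j ih =>
    obtain ⟨i, rfl⟩ := Fin.exists_succ_eq.2 (Fin.ne_zero_of_lt hba)
    have hlow : G i.castSucc j.castSucc = 0 := ih (by simpa using hba)
    have hij := entry i j.succ
    rw [mul_superdiagonal_apply_succ, hlow, zero_mul] at hij
    exact (mul_eq_zero.1 hij).resolve_left (hd i)

end Semiring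

theorem SpecialLinearGroup.mul_mul_inv_eq_iff {n : Type*} [DecidableEq n] [Fintype n]
    [CommRing R] (g : SpecialLinearGroup n R) (A B : Matrix n n R) :
    g * A * ((g⁻¹ : SpecialLinearGroup n R) : Matrix n n R) = B ↔ g * A = B * g := by
  constructor
  · rintro rfl
    rw [mul_assoc _ _ (g : Matrix n n R), ← SpecialLinearGroup.coe_mul, inv_mul_cancel,
      SpecialLinearGroup.coe_one, mul_one]
  · intro h
    rw [h, mul_assoc, ← SpecialLinearGroup.coe_mul, mul_inv_cancel, SpecialLinearGroup.coe_one,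
      mul_one]

section Field

variable {F : Type*} [Field F] {c d : Fin m → F}

theorem det_eq_of_mul_superdiagonal_eq {G : Matrix (Fin (m + 1)) (Fin (m + 1)) F}
    (hd : ∀ i, d i ≠ 0) (h : G * superdiagonal c = superdiagonal d * G) :
    G.det = G 0 0 ^ (m + 1) * ∏ i, (c i / d i) ^ (m - i) := by
  have hdiag (i : Fin m) : G i.succ i.succ = G i.castSucc i.castSucc * (c i / d i) := by
    rw [mul_div_assoc', eq_div_iff (hd i), mul_comm, ← mul_superdiagonal_apply_succ, h,
      superdiagonal_mul_apply_castSucc]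
  rw [det_of_isUpperTriangular (blockTriangular_of_mul_superdiagonal_eq hd h),
    ← Fin.prod_mul_partialProd]
  exact prod_congr rfl fun k _ => Fin.eq_mul_partialProd (x := fun k => G k k) hdiag k

theorem exists_specialLinearGroup_conj_superdiagonal_iff (hc : ∀ i, c i ≠ 0)
    (hd : ∀ i, d i ≠ 0) :
    (∃ g : SpecialLinearGroup (Fin (m + 1)) F,
        (g : Matrix (Fin (m + 1)) (Fin (m + 1)) F) * superdiagonal c *
          ((g⁻¹ : SpecialLinearGroup (Fin (m + 1)) F) : Matrix (Fin (m + 1)) (Fin (m + 1)) F) =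
            superdiagonal d) ↔
      ∃ y : Fˣ, (y : F) ^ (m + 1) = ∏ i, (d i / c i) ^ (m - i) := by
  set P := ∏ i, (c i / d i) ^ (m - i)
  have hP : P ≠ 0 := prod_ne_zero_iff.2 fun i _ => pow_ne_zero _ (div_ne_zero (hc i) (hd i))
  have hP_inv : ∏ i, (d i / c i) ^ (m - i) = P⁻¹ := by
    simp only [P, ← prod_inv_distrib, ← inv_pow, inv_div]
  simp_rw [SpecialLinearGroup.mul_mul_inv_eq_iff, hP_inv, ← mul_eq_one_iff_eq_inv₀ hP]
  constructor
  · rintro ⟨g, hg⟩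
    have hdet : g 0 0 ^ (m + 1) * P = 1 := by
      rw [← det_eq_of_mul_superdiagonal_eq hd hg, g.det_coe]
    have hg00 : g 0 0 ≠ 0 := pow_ne_zero_iff m.succ_ne_zero |>.1 (left_ne_zero_of_mul_eq_one hdet)
    exact ⟨Units.mk0 _ hg00, hdet⟩
  · rintro ⟨y, hy⟩
    let x k := (y : F) * Fin.partialProd (fun i => c i / d i) k
    refine ⟨⟨diagonal x, by rw [det_diagonal, Fin.prod_mul_partialProd, hy]⟩, ?_⟩
    rw [diagonal_mul_superdiagonal, superdiagonal_mul_diagonal]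
    congr 1
    funext i
    simp only [x, Fin.partialProd_succ]
    field_simp [hd i]

end Field

end Matrix

/-- Let `F` be a field, `n ≥ 2`, and let `c₁,…,c_{n−1}` and `d₁,…,d_{n−1}` be nonzero elements
of `F`.  Set `N = ∑ cᵢ E_{i,i+1}` and `N' = ∑ dᵢ E_{i,i+1}`.  Then there exists
`g ∈ SL_n(F)` with `g N g⁻¹ = N'` if and only if `∏_{i=1}^{n−1} (dᵢ/cᵢ)^{n−i}` is an `n`-th
power in `Fˣ`. -/
theorem slConj_regular_nilpotent_iff_nthPower
    {F : Type*} [Field F] (n : ℕ)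
    (c d : Fin (n - 1) → F) (hc : ∀ i, c i ≠ 0) (hd : ∀ i, d i ≠ 0) :
    (∃ g : Matrix.SpecialLinearGroup (Fin n) F,
        (g : Matrix (Fin n) (Fin n) F) *
          (∑ i : Fin (n - 1), Matrix.single
            (⟨i.1, by have := i.2; omega⟩ : Fin n) (⟨i.1 + 1, by have := i.2; omega⟩ : Fin n) (c i)) *
          ((g⁻¹ : Matrix.SpecialLinearGroup (Fin n) F) : Matrix (Fin n) (Fin n) F) =
        ∑ i : Fin (n - 1), Matrix.single
            (⟨i.1, by have := i.2; omega⟩ : Fin n) (⟨i.1 + 1, by have := i.2; omega⟩ : Fin n) (d i)) ↔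
      ∃ y : Fˣ, (y : F) ^ n = ∏ i : Fin (n - 1), (d i / c i) ^ (n - 1 - i.1) := by
  rcases n with _ | m
  · exact iff_of_true ⟨1, Subsingleton.elim _ _⟩ ⟨1, by simp⟩
  · -- `m + 1 - 1` reduces to `m`, and `⟨i, _⟩ : Fin (m + 1)` to `i.castSucc`.
    exact Matrix.exists_specialLinearGroup_conj_superdiagonal_iff hc hd
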